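/- arXiv:2309.10861 — 7 statements merged into one kernel-verified Lean document; each statement's English description precedes it below -/
import Mathlib

section
/- Let n ≥ 2, let R be a commutative ring, let a_1,…,a_{n−1} ∈ R, ℓ ∈ R, and let i ∈ {1,…,n−1}. Then det((X·I − A(i; ℓ, a))^{(1,n)}) = (−1)^{n−1} · ∏_{k=1}^{n−1} a_k in R[X]; in particular this determinant does not depend on the leak position i nor on the leak rate ℓ. -/
open Polynomial Matrix

/-- The path-with-leak compartmental matrix `A(i; ℓ, a)` for the directed path
`1 → 2 → ⋯ → n` with a leak from compartment `i`.  Compartment `k` (for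
`1 ≤ k ≤ n`) is encoded as the index `k - 1 : Fin n`. -/
def pathLeak {R : Type*} [CommRing R] (n : ℕ) (i : ℕ) (l : R) (a : ℕ → R) :
    Matrix (Fin n) (Fin n) R :=
  Matrix.of fun u v =>
    if u = v then
      (if (u : ℕ) + 1 = n then 0
       else if (u : ℕ) + 1 = i then -l - a i
       else -a ((u : ℕ) + 1))
    else if (u : ℕ) = (v : ℕ) + 1 then a ((v : ℕ) + 1)
    else 0

/-- `M^{(1,n)}`: the `(n-1)×(n-1)` matrix obtained from an `n×n` matrix `M`
by deleting row `1` (index `0`) and column `n` (index `n-1`). -/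
def minor1n {S : Type*} {n : ℕ} (M : Matrix (Fin n) (Fin n) S) :
    Matrix (Fin (n - 1)) (Fin (n - 1)) S :=
  M.submatrix (fun k => ⟨(k : ℕ) + 1, by have := k.isLt; omega⟩)
    (fun k => ⟨(k : ℕ), by have := k.isLt; omega⟩)

/-- Theorem (RHS of the input-output equation of the path model with a leak in
compartment `i`): `det((X·I − A(i; ℓ, a))^{(1,n)}) = (−1)^{n−1} · ∏_{k=1}^{n−1} a_k`,
independent of the leak position `i` and the leak rate `ℓ`. -/
theorem det_minor1n_charmatrix_pathLeak {R : Type*} [CommRing R] (n : ℕ) (hn : 2 ≤ n)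
    (a : ℕ → R) (l : R) (i : ℕ) (hi1 : 1 ≤ i) (hi2 : i ≤ n - 1) :
    (minor1n (charmatrix (pathLeak n i l a))).det =
      (-1) ^ (n - 1) * ∏ k ∈ Finset.Icc 1 (n - 1), C (a k) := by
  set M := minor1n (charmatrix (pathLeak n i l a)) with hM
  have htri : M.BlockTriangular id := by
    intro p q hpq
    simp only [id] at hpq
    have hne : (⟨(p : ℕ) + 1, by have := p.isLt; omega⟩ : Fin n) ≠
        ⟨(q : ℕ), by have := q.isLt; omega⟩ := by
      simp only [ne_eq, Fin.mk.injEq]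
      omega
    have hqp : (q : ℕ) < (p : ℕ) := hpq
    simp only [hM, minor1n, submatrix_apply]
    rw [charmatrix_apply_ne _ _ _ hne]
    have : pathLeak n i l a ⟨(p : ℕ) + 1, by have := p.isLt; omega⟩
        ⟨(q : ℕ), by have := q.isLt; omega⟩ = 0 := by
      simp only [pathLeak, Matrix.of_apply, if_neg hne]
      rw [if_neg (by omega)]
    rw [this, map_zero, neg_zero]
  have hdiag : ∀ k : Fin (n - 1), M k k = -C (a ((k : ℕ) + 1)) := by
    intro k
    have hne : (⟨(k : ℕ) + 1, by have := k.isLt; omega⟩ : Fin n) ≠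
        ⟨(k : ℕ), by have := k.isLt; omega⟩ := by
      simp only [ne_eq, Fin.mk.injEq]; omega
    simp only [hM, minor1n, submatrix_apply]
    rw [charmatrix_apply_ne _ _ _ hne]
    congr 1
    simp [pathLeak, Matrix.of_apply, if_neg hne]
  rw [Matrix.det_of_upperTriangular htri]
  simp only [hdiag]
  have : ∀ x : Fin (n-1), -C (a ((x:ℕ) + 1)) = (-1) * C (a ((x:ℕ) + 1)) := by
    intro x; ring
  simp only [this]
  rw [Finset.prod_mul_distrib, Finset.prod_const, Finset.card_univ, Fintype.card_fin]
  congr 1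
  rw [Fin.prod_univ_eq_prod_range (fun k => C (a (k + 1))), ← Finset.Ico_add_one_right_eq_Icc,
    Finset.prod_Ico_eq_prod_range]
  have hn1 : n - 1 + 1 - 1 = n - 1 := by omega
  rw [hn1]
  exact Finset.prod_congr rfl fun x _ => by rw [add_comm]
end

section
/- Let n ≥ 2, let R be a commutative ring, let a_1,…,a_{n−1} ∈ R and ℓ ∈ R, and let i, j ∈ {1,…,n−1}. Define b_1,…,b_{n−1} ∈ R by b_i = a_j, b_j = a_i, and b_k = a_k for k ∉ {i,j} (i.e., b = a composed with the transposition of i and j). Then det(X·I − A(i; ℓ, a)) = det(X·I − A(j; ℓ, b)) and det((X·I − A(i; ℓ, a))^{(1,n)}) = det((X·I − A(j; ℓ, b))^{(1,n)}) in R[X]. In other words, the path models with input in compartment 1, output in compartment n, and a single leak from compartment i, respectively compartment j, have identical input-output equations after the renaming of parameters that exchanges the outgoing-edge rates of compartments i and j and sends the leak rate of compartment i to the leak rate of compartment j; the models are permutation indistinguishable. -/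
open Polynomial Matrix

lemma pathLeak_diag {R : Type*} [CommRing R] (n p : ℕ) (l : R) (c : ℕ → R) (u : Fin n) :
    pathLeak n p l c u u =
      if (u : ℕ) + 1 = n then 0
      else if (u : ℕ) + 1 = p then -l - c p
      else -c ((u : ℕ) + 1) := by
  simp [pathLeak]

lemma pathLeak_charmatrix_det {R : Type*} [CommRing R] (n : ℕ) (i : ℕ) (l : R) (a : ℕ → R) :
    (charmatrix (pathLeak n i l a)).det =
      ∏ u : Fin n, ((X : R[X]) - C (pathLeak n i l a u u)) := by
  rw [Matrix.det_of_lowerTriangular]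
  · refine Finset.prod_congr rfl fun u _ => charmatrix_apply_eq _ _
  · intro u v h
    simp only [OrderDual.toDual_lt_toDual] at h
    rw [charmatrix_apply_ne _ _ _ (Fin.ne_of_lt h)]
    have h1 : (u : ℕ) < (v : ℕ) := h
    simp only [pathLeak, Matrix.of_apply, if_neg (Fin.ne_of_lt h), if_neg (by omega : ¬ (u:ℕ) = (v:ℕ)+1), map_zero, neg_zero]

lemma pathLeak_minor_det {R : Type*} [CommRing R] (n : ℕ) (i : ℕ) (l : R) (a : ℕ → R) :
    (minor1n (charmatrix (pathLeak n i l a))).det =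
      ∏ u : Fin (n - 1), (-C (a ((u : ℕ) + 1)) : R[X]) := by
  rw [Matrix.det_of_upperTriangular]
  · refine Finset.prod_congr rfl fun u _ => ?_
    have hne : (⟨(u : ℕ) + 1, by have := u.isLt; omega⟩ : Fin n) ≠ ⟨(u : ℕ), by have := u.isLt; omega⟩ := by
      simp [Fin.ext_iff]
    simp only [minor1n, Matrix.submatrix_apply, charmatrix_apply_ne _ _ _ hne]
    simp [pathLeak, Fin.ext_iff]
  · intro u v h
    simp only [id] at h
    have h1 : (v : ℕ) < (u : ℕ) := h
    have hne : (⟨(u : ℕ) + 1, by have := u.isLt; omega⟩ : Fin n) ≠ ⟨(v : ℕ), by have := v.isLt; omega⟩ := by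
      simp [Fin.ext_iff]; omega
    simp only [minor1n, Matrix.submatrix_apply, charmatrix_apply_ne _ _ _ hne]
    simp only [pathLeak, Matrix.of_apply, if_neg hne,
      if_neg (by simp [Fin.ext_iff]; omega : ¬ ((⟨(u : ℕ) + 1, by have := u.isLt; omega⟩ : Fin n) : ℕ) = ((⟨(v : ℕ), by have := v.isLt; omega⟩ : Fin n) : ℕ) + 1), map_zero, neg_zero]

/-- Theorem (permutation indistinguishability of the path models with a leak in
compartment `i`, resp. compartment `j`): if `b` is `a` composed with the
transposition of `i` and `j` (i.e. `b_i = a_j`, `b_j = a_i`, `b_k = a_k`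
otherwise), then `det(X·I − A(i; ℓ, a)) = det(X·I − A(j; ℓ, b))` and
`det((X·I − A(i; ℓ, a))^{(1,n)}) = det((X·I − A(j; ℓ, b))^{(1,n)})`. -/
theorem pathLeak_permutation_indistinguishable {R : Type*} [CommRing R]
    (n : ℕ) (hn : 2 ≤ n) (a b : ℕ → R) (l : R) (i j : ℕ)
    (hi1 : 1 ≤ i) (hi2 : i ≤ n - 1) (hj1 : 1 ≤ j) (hj2 : j ≤ n - 1)
    (hbi : b i = a j) (hbj : b j = a i)
    (hbk : ∀ k, k ≠ i → k ≠ j → b k = a k) :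
    (charmatrix (pathLeak n i l a)).det = (charmatrix (pathLeak n j l b)).det ∧
    (minor1n (charmatrix (pathLeak n i l a))).det =
      (minor1n (charmatrix (pathLeak n j l b))).det := by
  have hin : i < n := by omega
  have hjn : j < n := by omega
  constructor
  · rw [pathLeak_charmatrix_det, pathLeak_charmatrix_det]
    set pi : Fin n := ⟨i - 1, by omega⟩ with hpi
    set pj : Fin n := ⟨j - 1, by omega⟩ with hpj
    have e1 : ((pi : Fin n) : ℕ) + 1 = i := by show i - 1 + 1 = i; omega
    have e2 : ((pj : Fin n) : ℕ) + 1 = j := by show j - 1 + 1 = j; omega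
    have key : ∀ u : Fin n,
        pathLeak n j l b (Equiv.swap pi pj u) (Equiv.swap pi pj u) = pathLeak n i l a u u := by
      intro u
      rcases eq_or_ne u pi with rfl | hupi
      · rw [Equiv.swap_apply_left, pathLeak_diag, pathLeak_diag, e1, e2]
        rw [if_neg (show ¬ j = n by omega), if_neg (show ¬ i = n by omega)]
        simp [hbj]
      · rcases eq_or_ne u pj with rfl | hupj
        · rw [Equiv.swap_apply_right]
          have hij : i ≠ j := fun h => hupi (by simp [hpi, hpj, h])
          rw [pathLeak_diag, pathLeak_diag, e1, e2]
          rw [if_neg (show ¬ i = n by omega), if_neg (show ¬ j = n by omega),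
            if_neg hij, if_neg (Ne.symm hij), hbi]
        · rw [Equiv.swap_apply_of_ne_of_ne hupi hupj]
          have h1 : (u : ℕ) + 1 ≠ i := fun h => hupi (Fin.ext (by
            show (u : ℕ) = i - 1; omega))
          have h2 : (u : ℕ) + 1 ≠ j := fun h => hupj (Fin.ext (by
            show (u : ℕ) = j - 1; omega))
          rw [pathLeak_diag, pathLeak_diag]
          rcases eq_or_ne ((u : ℕ) + 1) n with h3 | h3
          · rw [if_pos h3, if_pos h3]
          · rw [if_neg h3, if_neg h3, if_neg h2, if_neg h1, hbk _ h1 h2]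
    calc ∏ u : Fin n, ((X : R[X]) - C (pathLeak n i l a u u))
        = ∏ u : Fin n, ((X : R[X]) -
            C (pathLeak n j l b (Equiv.swap pi pj u) (Equiv.swap pi pj u))) := by
          refine Finset.prod_congr rfl fun u _ => by rw [key]
      _ = ∏ u : Fin n, ((X : R[X]) - C (pathLeak n j l b u u)) :=
          Equiv.prod_comp (Equiv.swap pi pj)
            (fun u => (X : R[X]) - C (pathLeak n j l b u u))
  · rw [pathLeak_minor_det, pathLeak_minor_det]
    set qi : Fin (n - 1) := ⟨i - 1, by omega⟩ with hqi
    set qj : Fin (n - 1) := ⟨j - 1, by omega⟩ with hqj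
    have e1 : ((qi : Fin (n - 1)) : ℕ) + 1 = i := by show i - 1 + 1 = i; omega
    have e2 : ((qj : Fin (n - 1)) : ℕ) + 1 = j := by show j - 1 + 1 = j; omega
    have key : ∀ u : Fin (n - 1),
        b ((Equiv.swap qi qj u : Fin (n - 1)) + 1) = a ((u : ℕ) + 1) := by
      intro u
      rcases eq_or_ne u qi with rfl | hupi
      · rw [Equiv.swap_apply_left, e2, hbj, e1]
      · rcases eq_or_ne u qj with rfl | hupj
        · rw [Equiv.swap_apply_right, e1, hbi, e2]
        · rw [Equiv.swap_apply_of_ne_of_ne hupi hupj]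
          exact hbk _ (fun h => hupi (Fin.ext (by show (u : ℕ) = i - 1; omega)))
            (fun h => hupj (Fin.ext (by show (u : ℕ) = j - 1; omega)))
    calc ∏ u : Fin (n - 1), (-C (a ((u : ℕ) + 1)) : R[X])
        = ∏ u : Fin (n - 1),
            (-C (b ((Equiv.swap qi qj u : Fin (n - 1)) + 1)) : R[X]) := by
          refine Finset.prod_congr rfl fun u _ => by rw [key]
      _ = ∏ u : Fin (n - 1), (-C (b ((u : ℕ) + 1)) : R[X]) :=
          Equiv.prod_comp (Equiv.swap qi qj)
            (fun u : Fin (n - 1) => (-C (b ((u : ℕ) + 1)) : R[X]))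
end

section
/- Let n ≥ 2, let R be a commutative ring, let a_1,…,a_{n−1} ∈ R and b ∈ R. Then in R[X] one has det(X·I − A'(b; a)) = (X + b + a_{n−1}) · X · ∏_{k=1}^{n−2} (X + a_k). -/
open Polynomial Matrix

/-! Expanding along the first row, whose only nonzero entry is `X + a₁`, reduces
`det (X·I − A'(b; a))` on `n + 1` compartments to the same determinant on `n` compartments
with the rates `a` shifted by one. The base case `n = 2` is the `2 × 2` determinant
`(X + a₁)(X + b) − a₁ b = X (X + b + a₁)`. -/

/-- The terminal-cycle compartmental matrix `A'(b; a)` for the directed path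
`1 → 2 → ⋯ → n` together with the extra edge `n → n-1` with rate `b` and no
leaks.  Compartment `k` (for `1 ≤ k ≤ n`) is encoded as the index
`k - 1 : Fin n`.  The entries are `A'_{k,k} = -a_k` for `1 ≤ k ≤ n-1`;
`A'_{n,n} = -b`; `A'_{n-1,n} = b`; `A'_{k+1,k} = a_k` for `1 ≤ k ≤ n-1`;
all other entries `0`. -/
def termCycle {R : Type*} [CommRing R] (n : ℕ) (b : R) (a : ℕ → R) :
    Matrix (Fin n) (Fin n) R :=
  Matrix.of fun u v =>
    if u = v then
      (if (u : ℕ) + 1 = n then -b else -a ((u : ℕ) + 1))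
    else if (u : ℕ) = (v : ℕ) + 1 then a ((v : ℕ) + 1)
    else if (u : ℕ) + 2 = n ∧ (v : ℕ) + 1 = n then b
    else 0

theorem Matrix.det_eq_mul_det_submatrix_succ_of_row_zero {R : Type*} [CommRing R] {n : ℕ}
    (M : Matrix (Fin (n + 1)) (Fin (n + 1)) R) (hM : ∀ j ≠ 0, M 0 j = 0) :
    M.det = M 0 0 * (M.submatrix Fin.succ Fin.succ).det := by
  rw [det_succ_row_zero, Fin.sum_univ_succ, Finset.sum_eq_zero fun j _ => by
    rw [hM _ (Fin.succ_ne_zero j), mul_zero, zero_mul]]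
  simp

theorem Matrix.charmatrix_submatrix {R m n : Type*} [CommRing R] [DecidableEq m] [DecidableEq n]
    [Fintype m] [Fintype n] (A : Matrix n n R) {e : m → n} (he : Function.Injective e) :
    charmatrix (A.submatrix e e) = (charmatrix A).submatrix e e := by
  ext i j : 1
  by_cases h : i = j
  · subst h; simp
  · simp [charmatrix_apply_ne _ _ _ h, charmatrix_apply_ne _ _ _ (he.ne h)]

section termCycle

variable {R : Type*} [CommRing R] (b : R) (a : ℕ → R)

theorem termCycle_submatrix_succ (n : ℕ) :
    (termCycle (n + 1) b a).submatrix Fin.succ Fin.succ = termCycle n b (fun k => a (k + 1)) := by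
  ext i j
  simp only [submatrix_apply, termCycle, of_apply, Fin.val_succ, Fin.succ_inj]
  split_ifs <;> first | rfl | omega

theorem termCycle_zero_zero (n : ℕ) : termCycle (n + 2) b a 0 0 = -a 1 := by
  simp [termCycle]

theorem termCycle_zero_of_ne_zero {n : ℕ} {j : Fin (n + 3)} (hj : j ≠ 0) :
    termCycle (n + 3) b a 0 j = 0 := by
  simp [termCycle, Ne.symm hj]

theorem charmatrix_termCycle_two :
    charmatrix (termCycle 2 b a) = !![X + C (a 1), -C b; -C (a 1), X + C b] := by
  ext i j
  fin_cases i <;> fin_cases j <;> simp [termCycle]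

theorem det_charmatrix_termCycle_two :
    (charmatrix (termCycle 2 b a)).det = (X + C b + C (a 1)) * X := by
  rw [charmatrix_termCycle_two, det_fin_two_of]
  ring

theorem det_charmatrix_termCycle_add_two (m : ℕ) :
    (charmatrix (termCycle (m + 2) b a)).det =
      (X + C b + C (a (m + 1))) * X * ∏ k ∈ Finset.range m, (X + C (a (k + 1))) := by
  induction m generalizing a with
  | zero => simpa using det_charmatrix_termCycle_two b a
  | succ m ih =>
    rw [det_eq_mul_det_submatrix_succ_of_row_zero _ fun j hj => by
        rw [charmatrix_apply_ne _ _ _ hj.symm, termCycle_zero_of_ne_zero b a hj, map_zero, neg_zero],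
      ← charmatrix_submatrix _ (Fin.succ_injective _), termCycle_submatrix_succ b a, ih,
      charmatrix_apply_eq, termCycle_zero_zero b a, Finset.prod_range_succ']
    simp only [map_neg, sub_neg_eq_add, zero_add]
    ring

end termCycle

/-- Theorem (LHS of the input-output equation of the terminal-cycle model):
`det(X·I − A'(b; a)) = (X + b + a_{n−1}) · X · ∏_{k=1}^{n−2} (X + a_k)`. -/
theorem det_charmatrix_termCycle {R : Type*} [CommRing R] (n : ℕ) (hn : 2 ≤ n)
    (a : ℕ → R) (b : R) :
    (charmatrix (termCycle n b a)).det =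
      (X + C b + C (a (n - 1))) * X *
        ∏ k ∈ Finset.Icc 1 (n - 2), (X + C (a k)) := by
  obtain ⟨m, rfl⟩ := Nat.exists_eq_add_of_le' hn
  rw [det_charmatrix_termCycle_add_two, ← Finset.Ico_add_one_right_eq_Icc,
    Finset.prod_Ico_eq_prod_range]
  simp [add_comm]
end

section
/- Let n ≥ 2, let R be a commutative ring, and let a_1,…,a_{n−1} ∈ R and ℓ ∈ R. Then det(X·I − A(n−1; ℓ, a)) = det(X·I − A'(ℓ; a)) and det((X·I − A(n−1; ℓ, a))^{(1,n)}) = det((X·I − A'(ℓ; a))^{(1,n)}) in R[X]. That is, the path model with input in compartment 1, output in compartment n, and a leak from compartment n−1 is permutation indistinguishable from the model obtained by replacing the leak with an edge n → n−1 whose rate takes the role of the leak rate. -/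
open Polynomial Matrix

section helpers

variable {R : Type*} [CommRing R]

private lemma pathLeak_diag_s6 {n i : ℕ} (l : R) (a : ℕ → R) (u : Fin n)
    (h1 : (u : ℕ) + 1 ≠ n) (h2 : (u : ℕ) + 1 ≠ i) :
    pathLeak n i l a u u = -a ((u : ℕ) + 1) := by
  simp [pathLeak, h1, h2]

private lemma pathLeak_diag_last {n i : ℕ} (l : R) (a : ℕ → R) (u : Fin n)
    (h1 : (u : ℕ) + 1 = n) : pathLeak n i l a u u = 0 := by
  simp [pathLeak, h1]

private lemma pathLeak_diag_leak {n i : ℕ} (l : R) (a : ℕ → R) (u : Fin n)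
    (h1 : (u : ℕ) + 1 ≠ n) (h2 : (u : ℕ) + 1 = i) :
    pathLeak n i l a u u = -l - a i := by
  have h3 : i ≠ n := by omega
  simp [pathLeak, h1, h2, h3]

private lemma pathLeak_sub {n i : ℕ} (l : R) (a : ℕ → R) (u v : Fin n)
    (h1 : (u : ℕ) = (v : ℕ) + 1) : pathLeak n i l a u v = a ((v : ℕ) + 1) := by
  have hne : u ≠ v := fun h => by have := Fin.ext_iff.mp h; omega
  simp [pathLeak, hne, h1]

private lemma pathLeak_zero {n i : ℕ} (l : R) (a : ℕ → R) (u v : Fin n)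
    (h1 : u ≠ v) (h2 : (u : ℕ) ≠ (v : ℕ) + 1) : pathLeak n i l a u v = 0 := by
  simp [pathLeak, h1, h2]

private lemma termCycle_diag {n : ℕ} (b : R) (a : ℕ → R) (u : Fin n)
    (h1 : (u : ℕ) + 1 ≠ n) : termCycle n b a u u = -a ((u : ℕ) + 1) := by
  simp [termCycle, h1]

private lemma termCycle_diag_last {n : ℕ} (b : R) (a : ℕ → R) (u : Fin n)
    (h1 : (u : ℕ) + 1 = n) : termCycle n b a u u = -b := by
  simp [termCycle, h1]

private lemma termCycle_sub {n : ℕ} (b : R) (a : ℕ → R) (u v : Fin n)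
    (h1 : (u : ℕ) = (v : ℕ) + 1) : termCycle n b a u v = a ((v : ℕ) + 1) := by
  have hne : u ≠ v := fun h => by have := Fin.ext_iff.mp h; omega
  simp [termCycle, hne, h1]

private lemma termCycle_corner {n : ℕ} (b : R) (a : ℕ → R) (u v : Fin n)
    (h1 : (u : ℕ) + 2 = n) (h2 : (v : ℕ) + 1 = n) : termCycle n b a u v = b := by
  have hne : u ≠ v := fun h => by have := Fin.ext_iff.mp h; omega
  have hne2 : (u : ℕ) ≠ (v : ℕ) + 1 := by omega
  have hne3 : (u : ℕ) + 1 ≠ n := by omega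
  have hne4 : (u : ℕ) ≠ n := by omega
  simp [termCycle, hne, hne2, h1, h2, hne3, hne4]

private lemma termCycle_zero {n : ℕ} (b : R) (a : ℕ → R) (u v : Fin n)
    (h1 : u ≠ v) (h2 : (u : ℕ) ≠ (v : ℕ) + 1)
    (h3 : ¬((u : ℕ) + 2 = n ∧ (v : ℕ) + 1 = n)) : termCycle n b a u v = 0 := by
  simp [termCycle, h1, h2, h3]

end helpers


/-- Theorem (permutation indistinguishability of the path model with a leak in
compartment `n-1` and the terminal-cycle model whose return-edge rate takes the
role of the leak rate): `det(X·I − A(n−1; ℓ, a)) = det(X·I − A'(ℓ; a))` and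
`det((X·I − A(n−1; ℓ, a))^{(1,n)}) = det((X·I − A'(ℓ; a))^{(1,n)})`. -/
theorem pathLeak_termCycle_indistinguishable {R : Type*} [CommRing R]
    (n : ℕ) (hn : 2 ≤ n) (a : ℕ → R) (l : R) :
    (charmatrix (pathLeak n (n - 1) l a)).det = (charmatrix (termCycle n l a)).det ∧
    (minor1n (charmatrix (pathLeak n (n - 1) l a))).det =
      (minor1n (charmatrix (termCycle n l a))).det := by
  obtain ⟨m, rfl⟩ : ∃ m, n = m + 2 := ⟨n - 2, by omega⟩
  show (charmatrix (pathLeak (m + 2) (m + 1) l a)).det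
        = (charmatrix (termCycle (m + 2) l a)).det ∧
      (minor1n (charmatrix (pathLeak (m + 2) (m + 1) l a))).det
        = (minor1n (charmatrix (termCycle (m + 2) l a))).det
  set A := pathLeak (m + 2) (m + 1) l a with hA
  set B := termCycle (m + 2) l a with hB
  set CA := charmatrix A with hCA
  set CB := charmatrix B with hCB
  set pen : Fin (m + 2) := ⟨m, by omega⟩ with hpen
  set lst : Fin (m + 2) := ⟨m + 1, by omega⟩ with hlst
  have hpenv : (pen : ℕ) = m := rfl
  have hlstv : (lst : ℕ) = m + 1 := rfl
  have hpl : pen ≠ lst := fun h => by have := Fin.ext_iff.mp h; omega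
  -- generic diagonal entries
  have hAdiag : ∀ i : Fin (m + 2), i ≠ pen → i ≠ lst →
      CA i i = X + Polynomial.C (a ((i : ℕ) + 1)) := by
    intro i h1 h2
    have h1' : (i : ℕ) ≠ m := fun h => h1 (Fin.ext (h.trans hpenv.symm))
    have h2' : (i : ℕ) ≠ m + 1 := fun h => h2 (Fin.ext (h.trans hlstv.symm))
    rw [hCA, charmatrix_apply_eq, hA, pathLeak_diag_s6 l a i (by omega) (by omega),
      map_neg, sub_neg_eq_add]
  have hBdiag : ∀ i : Fin (m + 2), i ≠ lst →
      CB i i = X + Polynomial.C (a ((i : ℕ) + 1)) := by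
    intro i h2
    have h2' : (i : ℕ) ≠ m + 1 := fun h => h2 (Fin.ext (h.trans hlstv.symm))
    rw [hCB, charmatrix_apply_eq, hB, termCycle_diag l a i (by omega),
      map_neg, sub_neg_eq_add]
  constructor
  · -- the determinants of the charmatrices
    -- CA is lower triangular
    have hCAtri : CA.BlockTriangular OrderDual.toDual := by
      intro i j hij
      have hij' : (i : ℕ) < j := hij
      rw [hCA, charmatrix_apply_ne _ _ _ (fun h => absurd (Fin.ext_iff.mp h) (by omega)),
        hA, pathLeak_zero l a i j (fun h => absurd (Fin.ext_iff.mp h) (by omega)) (by omega),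
        map_zero, neg_zero]
    have hdetCA : CA.det = ∏ i, CA i i := Matrix.det_of_lowerTriangular CA hCAtri
    -- split the last column of CB
    set u : Fin (m + 2) → R[X] := fun i => if i = pen then -(Polynomial.C l) else 0 with hu
    set v : Fin (m + 2) → R[X] := fun i => if i = lst then X + Polynomial.C l else 0 with hv
    have hsplit : CB = CB.updateCol lst (u + v) := by
      refine Matrix.ext fun i j => ?_
      rw [Matrix.updateCol_apply]
      by_cases hj : j = lst
      · subst hj
        rw [if_pos rfl]
        by_cases hi : i = lst
        · subst hi
          have huv : (u + v) lst = X + Polynomial.C l := by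
            simp [hu, hv, hpl.symm]
          rw [huv, hCB, charmatrix_apply_eq, hB, termCycle_diag_last l a lst (by omega),
            map_neg, sub_neg_eq_add]
        · by_cases hip : i = pen
          · subst hip
            have huv : (u + v) pen = -(Polynomial.C l) := by
              simp [hu, hv, hpl]
            rw [huv, hCB, charmatrix_apply_ne _ _ _ hpl, hB,
              termCycle_corner l a pen lst (by omega) (by omega)]
          · have huv : (u + v) i = 0 := by
              simp [hu, hv, hip, hi]
            have hi' : (i : ℕ) ≠ m + 1 := fun h => hi (Fin.ext (h.trans hlstv.symm))
            have hip' : (i : ℕ) ≠ m := fun h => hip (Fin.ext (h.trans hpenv.symm))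
            rw [huv, hCB, charmatrix_apply_ne _ _ _ hi, hB,
              termCycle_zero l a i lst hi (by omega) (by omega), map_zero, neg_zero]
      · rw [if_neg hj]
    have hdetCB : CB.det = (CB.updateCol lst u).det + (CB.updateCol lst v).det := by
      conv_lhs => rw [hsplit]
      exact Matrix.det_updateCol_add CB lst u v
    -- N1 := updateColumn lst v is lower triangular
    have hN1tri : (CB.updateCol lst v).BlockTriangular OrderDual.toDual := by
      intro i j hij
      have hij' : (i : ℕ) < j := hij
      rw [Matrix.updateCol_apply]
      by_cases hj : j = lst
      · subst hj
        rw [if_pos rfl, hv]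
        exact if_neg (fun h => absurd (Fin.ext_iff.mp h) (by omega))
      · have hj' : (j : ℕ) ≠ m + 1 := fun h => hj (Fin.ext (h.trans hlstv.symm))
        rw [if_neg hj, hCB, charmatrix_apply_ne _ _ _
          (fun h => absurd (Fin.ext_iff.mp h) (by omega)), hB,
          termCycle_zero l a i j (fun h => absurd (Fin.ext_iff.mp h) (by omega))
            (by omega) (by omega), map_zero, neg_zero]
    have hdetN1 : (CB.updateCol lst v).det = ∏ i, (CB.updateCol lst v) i i :=
      Matrix.det_of_lowerTriangular _ hN1tri
    -- N2 := updateColumn lst u ; permute rows by swap pen lst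
    set σ : Equiv.Perm (Fin (m + 2)) := Equiv.swap pen lst with hσ
    have hN2perm : ((CB.updateCol lst u).submatrix σ id).det
        = Equiv.Perm.sign σ * (CB.updateCol lst u).det :=
      Matrix.det_permute σ _
    have hsign : Equiv.Perm.sign σ = -1 := by
      rw [hσ, Equiv.Perm.sign_swap hpl]
    have hN2tri : ((CB.updateCol lst u).submatrix σ id).BlockTriangular OrderDual.toDual := by
      intro i j hij
      have hij' : (i : ℕ) < j := hij
      rw [Matrix.submatrix_apply, id, Matrix.updateCol_apply]
      by_cases hj : j = lst
      · subst hj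
        rw [if_pos rfl, hu]
        refine if_neg ?_
        by_cases hip : i = pen
        · subst hip; rw [hσ, Equiv.swap_apply_left]; exact hpl.symm
        · rw [hσ, Equiv.swap_apply_of_ne_of_ne hip
            (fun h => absurd (Fin.ext_iff.mp h) (by omega))]
          exact hip
      · have hj' : (j : ℕ) ≠ m + 1 := fun h => hj (Fin.ext (h.trans hlstv.symm))
        have hσi : σ i = i := by
          refine Equiv.swap_apply_of_ne_of_ne ?_ ?_
          · exact fun h => absurd (Fin.ext_iff.mp h) (by omega)
          · exact fun h => absurd (Fin.ext_iff.mp h) (by omega)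
        rw [if_neg hj, hσi, hCB, charmatrix_apply_ne _ _ _
          (fun h => absurd (Fin.ext_iff.mp h) (by omega)), hB,
          termCycle_zero l a i j (fun h => absurd (Fin.ext_iff.mp h) (by omega))
            (by omega) (by omega), map_zero, neg_zero]
    have hdetN2p : ((CB.updateCol lst u).submatrix σ id).det
        = ∏ i, (CB.updateCol lst u) (σ i) i :=
      Matrix.det_of_lowerTriangular _ hN2tri
    -- now compute all four products by splitting off pen and lst
    have hsplitprod : ∀ f : Fin (m + 2) → R[X],
        ∏ i, f i = f pen * (f lst * ∏ i ∈ (Finset.univ.erase pen).erase lst, f i) := by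
      intro f
      rw [← Finset.mul_prod_erase Finset.univ f (Finset.mem_univ pen),
        ← Finset.mul_prod_erase _ f (Finset.mem_erase.mpr ⟨hpl.symm, Finset.mem_univ lst⟩)]
    set P : R[X] := ∏ i ∈ (Finset.univ.erase pen).erase lst,
      (X + Polynomial.C (a ((i : ℕ) + 1))) with hP
    have hmem : ∀ i ∈ (Finset.univ.erase pen).erase lst, i ≠ pen ∧ i ≠ lst := by
      intro i hi
      rw [Finset.mem_erase, Finset.mem_erase] at hi
      exact ⟨hi.2.1, hi.1⟩
    -- product for CA
    have hprodCA : ∏ i, CA i i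
        = (X + Polynomial.C l + Polynomial.C (a (m + 1))) * (X * P) := by
      rw [hsplitprod]
      have h1 : CA pen pen = X + Polynomial.C l + Polynomial.C (a (m + 1)) := by
        rw [hCA, charmatrix_apply_eq, hA, pathLeak_diag_leak l a pen (by omega) (by omega)]
        simp only [map_sub, map_neg]
        ring
      have h2 : CA lst lst = X := by
        rw [hCA, charmatrix_apply_eq, hA, pathLeak_diag_last l a lst (by omega),
          map_zero, sub_zero]
      rw [h1, h2, Finset.prod_congr rfl (fun i hi => hAdiag i (hmem i hi).1 (hmem i hi).2)]
    -- product for N1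
    have hprodN1 : ∏ i, (CB.updateCol lst v) i i
        = (X + Polynomial.C (a (m + 1))) * ((X + Polynomial.C l) * P) := by
      rw [hsplitprod]
      have h1 : (CB.updateCol lst v) pen pen = X + Polynomial.C (a (m + 1)) := by
        rw [Matrix.updateCol_apply, if_neg hpl]
        rw [hBdiag pen hpl, hpenv]
      have h2 : (CB.updateCol lst v) lst lst = X + Polynomial.C l := by
        rw [Matrix.updateCol_apply, if_pos rfl, hv]; simp
      have h3 : ∀ i ∈ (Finset.univ.erase pen).erase lst,
          (CB.updateCol lst v) i i = X + Polynomial.C (a ((i : ℕ) + 1)) := by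
        intro i hi
        rw [Matrix.updateCol_apply, if_neg (hmem i hi).2]
        exact hBdiag i (hmem i hi).2
      rw [h1, h2, Finset.prod_congr rfl h3]
    -- product for permuted N2
    have hprodN2 : ∏ i, (CB.updateCol lst u) (σ i) i
        = -(Polynomial.C (a (m + 1))) * (-(Polynomial.C l) * P) := by
      rw [hsplitprod]
      have h1 : (CB.updateCol lst u) (σ pen) pen = -(Polynomial.C (a (m + 1))) := by
        rw [hσ, Equiv.swap_apply_left, Matrix.updateCol_apply, if_neg hpl,
          hCB, charmatrix_apply_ne _ _ _ hpl.symm, hB,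
          termCycle_sub l a lst pen (by omega), hpenv]
      have h2 : (CB.updateCol lst u) (σ lst) lst = -(Polynomial.C l) := by
        rw [hσ, Equiv.swap_apply_right, Matrix.updateCol_apply, if_pos rfl]
        simp [hu]
      have h3 : ∀ i ∈ (Finset.univ.erase pen).erase lst,
          (CB.updateCol lst u) (σ i) i = X + Polynomial.C (a ((i : ℕ) + 1)) := by
        intro i hi
        rw [hσ, Equiv.swap_apply_of_ne_of_ne (hmem i hi).1 (hmem i hi).2,
          Matrix.updateCol_apply, if_neg (hmem i hi).2]
        exact hBdiag i (hmem i hi).2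
      rw [h1, h2, Finset.prod_congr rfl h3]
    -- put everything together
    have hdetN2 : (CB.updateCol lst u).det
        = -(-(Polynomial.C (a (m + 1))) * (-(Polynomial.C l) * P)) := by
      have h := hN2perm
      rw [hdetN2p, hprodN2, hsign] at h
      simp only [Units.val_neg, Units.val_one, Int.cast_neg, Int.cast_one, neg_one_mul] at h
      linear_combination h
    rw [hdetCA, hdetCB, hdetN1, hprodCA, hprodN1, hdetN2]
    ring
  · -- the minors
    have htriA : (minor1n CA).BlockTriangular id := by
      intro k k' hkk'
      have h : (k' : ℕ) < k := hkk'
      have hk := k.isLt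
      rw [minor1n, Matrix.submatrix_apply, hCA, charmatrix_apply_ne _ _ _
        (fun hc => absurd (Fin.ext_iff.mp hc) (by simp; omega)), hA,
        pathLeak_zero l a _ _ (fun hc => absurd (Fin.ext_iff.mp hc) (by simp; omega))
          (by simp; omega), map_zero, neg_zero]
    have htriB : (minor1n CB).BlockTriangular id := by
      intro k k' hkk'
      have h : (k' : ℕ) < k := hkk'
      have hk := k.isLt
      have hk' := k'.isLt
      rw [minor1n, Matrix.submatrix_apply, hCB, charmatrix_apply_ne _ _ _
        (fun hc => absurd (Fin.ext_iff.mp hc) (by simp; omega)), hB,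
        termCycle_zero l a _ _ (fun hc => absurd (Fin.ext_iff.mp hc) (by simp; omega))
          (by simp; omega) (by simp; omega), map_zero, neg_zero]
    rw [Matrix.det_of_upperTriangular htriA, Matrix.det_of_upperTriangular htriB]
    refine Finset.prod_congr rfl fun k _ => ?_
    rw [minor1n, minor1n, Matrix.submatrix_apply, Matrix.submatrix_apply,
      hCA, hCB, charmatrix_apply_ne _ _ _ (fun hc => absurd (Fin.ext_iff.mp hc) (by simp)),
      charmatrix_apply_ne _ _ _ (fun hc => absurd (Fin.ext_iff.mp hc) (by simp)),
      hA, hB, pathLeak_sub l a _ _ (by simp), termCycle_sub l a _ _ (by simp)]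
end

section
/- Let n ≥ 3, let R be a commutative ring, let δ be a nonempty finite type with distinguished elements s, t ∈ δ, and let i, j be integers with 1 ≤ i ≤ j ≤ n−1 and i ≤ n−2. Let a_1,…,a_{n−1} ∈ R, c, d ∈ R, and let B be an arbitrary δ×δ matrix over R. Define a'_1 = a_{n−1} and a'_k = a_{k−1} for 2 ≤ k ≤ n−1 (the cyclic shift of the path rates). Then det(X·I − D(i, j; a, c, d, B)) = det(X·I − D(i+1, j+1; a', c, d, B)) in R[X]. That is, the left-hand-side coefficients of the input-output equations of the detour model at position (i,j) and the detour model at position (i+1,j+1) coincide after cyclically renaming the path-edge rates. -/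
open Polynomial Matrix

/-- The detour compartmental matrix `D(i, j; a, c, d, B)`: the path
`1 → 2 → ⋯ → n` with an off-ramp edge `i → s` (rate `c`) into a detour
subgraph with compartmental-type matrix `B` on vertex set `δ`, and an on-ramp
edge `t → j` (rate `d`) back onto the path.  Compartment `k` of the path
(for `1 ≤ k ≤ n`) is encoded as `Sum.inl (k - 1) : Fin n ⊕ δ`.  The entries
are `D_{k,k} = -a_k` for `1 ≤ k ≤ n-1`, `k ≠ i`; `D_{i,i} = -a_i - c`;
`D_{n,n} = 0`; `D_{k+1,k} = a_k` for `1 ≤ k ≤ n-1`; `D_{s,i} = c`;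
`D_{j,t} = d`; `B` on the `δ×δ` block; all other entries `0`. -/
def detour {R : Type*} [CommRing R] {δ : Type*} [DecidableEq δ]
    (n : ℕ) (i j : ℕ) (a : ℕ → R) (c d : R) (B : Matrix δ δ R) (s t : δ) :
    Matrix (Fin n ⊕ δ) (Fin n ⊕ δ) R :=
  Matrix.of fun u v =>
    match u, v with
    | Sum.inl u, Sum.inl v =>
        if u = v then
          (if (u : ℕ) + 1 = n then 0
           else if (u : ℕ) + 1 = i then -a i - c
           else -a ((u : ℕ) + 1))
        else if (u : ℕ) = (v : ℕ) + 1 then a ((v : ℕ) + 1)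
        else 0
    | Sum.inl u, Sum.inr w => if (u : ℕ) + 1 = j ∧ w = t then d else 0
    | Sum.inr w, Sum.inl v => if w = s ∧ (v : ℕ) + 1 = i then c else 0
    | Sum.inr w, Sum.inr w' => B w w'

theorem det_fromBlocks_single_single {R : Type*} [CommRing R]
    {l m : Type*} [Fintype l] [Fintype m] [DecidableEq l] [DecidableEq m]
    (A : Matrix l l R) (G : Matrix m m R) (e f : R) (i' j' : l) (s t : m) :
    (fromBlocks A
      (Matrix.of fun u w => if u = j' ∧ w = t then e else 0)
      (Matrix.of fun w u => if w = s ∧ u = i' then f else 0) G).det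
    = A.det * G.det -
      (A.updateRow j' (Pi.single i' f)).det * (G.updateRow s (Pi.single t e)).det := by
  set F : Matrix m l R := Matrix.of fun w u => if w = s ∧ u = i' then f else 0 with hF
  set N : Matrix (l ⊕ m) (l ⊕ m) R := fromBlocks A 0 F G with hN
  set K : Matrix (l ⊕ m) (l ⊕ m) R :=
    fromBlocks (A.updateRow j' 0)
      (Matrix.of fun u w => if u = j' ∧ w = t then e else 0) 0 G with hK
  have hM : (fromBlocks A
      (Matrix.of fun u w => if u = j' ∧ w = t then e else 0) F G)
      = N.updateRow (Sum.inl j') (N (Sum.inl j') + Pi.single (Sum.inr t) e) := by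
    ext u v
    rcases u with u | u <;> rcases v with v | v <;>
      simp [hN, updateRow_apply, Pi.single_apply, fromBlocks] <;> aesop
  have hN₁ : N.updateRow (Sum.inl j') (Pi.single (Sum.inr t) e)
      = K.updateRow (Sum.inr s) (K (Sum.inr s) + Pi.single (Sum.inl i') f) := by
    ext u v
    rcases u with u | u <;> rcases v with v | v <;>
      simp [hN, hK, hF, updateRow_apply, Pi.single_apply, fromBlocks] <;> aesop
  have hQ : (K.updateRow (Sum.inr s) (Pi.single (Sum.inl i') f)).submatrix
        (Equiv.swap (Sum.inl j' : l ⊕ m) (Sum.inr s)) id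
      = fromBlocks (A.updateRow j' (Pi.single i' f)) 0 0
          (G.updateRow s (Pi.single t e)) := by
    ext u v
    rcases u with u | u <;> rcases v with v | v <;>
      simp [hK, updateRow_apply, Pi.single_apply, fromBlocks, Equiv.swap_apply_def] <;> aesop
  have hdetQ : (K.updateRow (Sum.inr s) (Pi.single (Sum.inl i') f)).det
      = -((A.updateRow j' (Pi.single i' f)).det * (G.updateRow s (Pi.single t e)).det) := by
    have := det_permute (Equiv.swap (Sum.inl j' : l ⊕ m) (Sum.inr s))
      (K.updateRow (Sum.inr s) (Pi.single (Sum.inl i') f))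
    rw [hQ] at this
    rw [det_fromBlocks_zero₁₂] at this
    rw [Equiv.Perm.sign_swap (by simp)] at this
    have h2 := this.symm
    simp only [Units.val_neg, Units.val_one, Int.cast_neg, Int.cast_one, neg_mul, one_mul] at h2 ⊢
    linear_combination -h2
  rw [hM, det_updateRow_add, updateRow_eq_self, hN₁, det_updateRow_add, updateRow_eq_self]
  rw [hdetQ]
  rw [hN, hK, det_fromBlocks_zero₁₂, det_fromBlocks_zero₂₁]
  have hz : (A.updateRow j' (0 : l → R)).det = 0 :=
    det_eq_zero_of_row_eq_zero j' (by simp)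
  rw [hz]
  ring

theorem prod_cycle_shift {β : Type*} [CommMonoid β] (n i : ℕ)
    (hn : 3 ≤ n) (hi1 : 1 ≤ i) (hi2 : i ≤ n - 2)
    (g g' : Fin n → β)
    (h_spec : g ⟨i - 1, by omega⟩ = g' ⟨i, by omega⟩)
    (h_last : g ⟨n - 1, by omega⟩ = g' ⟨n - 1, by omega⟩)
    (h_wrap : g ⟨n - 2, by omega⟩ = g' ⟨0, by omega⟩)
    (h_mid : ∀ (u : ℕ) (hu : u < n) (h3 : u ≠ i - 1) (h2 : u ≠ n - 2)
      (h1 : u ≠ n - 1), g ⟨u, hu⟩ = g' ⟨u + 1, by omega⟩) :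
    ∏ u, g u = ∏ u, g' u := by
  refine Fintype.prod_equiv
    ((⟨fun u => if h1 : (u : ℕ) = n - 1 then u
      else if h2 : (u : ℕ) = n - 2 then ⟨0, by omega⟩
      else ⟨(u : ℕ) + 1, by have := u.isLt; omega⟩,
     fun v => if h1 : (v : ℕ) = n - 1 then v
      else if h2 : (v : ℕ) = 0 then ⟨n - 2, by omega⟩
      else ⟨(v : ℕ) - 1, by have := v.isLt; omega⟩, ?_, ?_⟩ : Fin n ≃ Fin n)) g g' ?_
  · intro u
    have hu := u.isLt
    dsimp only
    by_cases h1 : (u : ℕ) = n - 1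
    · rw [dif_pos h1, dif_pos h1]
    · by_cases h2 : (u : ℕ) = n - 2
      · rw [dif_neg h1, dif_pos h2, dif_neg (show ¬(0 : ℕ) = n - 1 by omega),
          dif_pos (show (0 : ℕ) = 0 from rfl)]
        exact Fin.ext (by simp [h2])
      · rw [dif_neg h1, dif_neg h2, dif_neg (show ¬((u : ℕ) + 1) = n - 1 by omega),
          dif_neg (show ¬((u : ℕ) + 1) = 0 by omega)]
        exact Fin.ext (by simp)
  · intro v
    have hv := v.isLt
    dsimp only
    by_cases h1 : (v : ℕ) = n - 1
    · rw [dif_pos h1, dif_pos h1]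
    · by_cases h2 : (v : ℕ) = 0
      · rw [dif_neg h1, dif_pos h2, dif_neg (show ¬(n - 2 : ℕ) = n - 1 by omega),
          dif_pos (show (n - 2 : ℕ) = n - 2 from rfl)]
        exact Fin.ext (by simp [h2])
      · rw [dif_neg h1, dif_neg h2, dif_neg (show ¬((v : ℕ) - 1) = n - 1 by omega),
          dif_neg (show ¬((v : ℕ) - 1) = n - 2 by omega)]
        exact Fin.ext (by simp; omega)
  · intro u
    have hu := u.isLt
    simp only [Equiv.coe_fn_mk]
    by_cases h1 : (u : ℕ) = n - 1
    · rw [dif_pos h1]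
      exact (congrArg g (Fin.ext h1)).trans
        (h_last.trans (congrArg g' (Fin.ext h1.symm)))
    · by_cases h2 : (u : ℕ) = n - 2
      · rw [dif_neg h1, dif_pos h2]
        exact (congrArg g (Fin.ext h2)).trans h_wrap
      · rw [dif_neg h1, dif_neg h2]
        by_cases h3 : (u : ℕ) = i - 1
        · exact (congrArg g (Fin.ext h3)).trans
            (h_spec.trans (congrArg g' (Fin.ext (show i = (u : ℕ) + 1 by omega))))
        · exact h_mid (u : ℕ) u.isLt h3 h2 h1

/-- The path block of the detour matrix. -/
def pblk {R : Type*} [CommRing R] (n i : ℕ) (a : ℕ → R) (c : R) :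
    Matrix (Fin n) (Fin n) R :=
  Matrix.of fun u v =>
    if u = v then
      (if (u : ℕ) + 1 = n then 0
       else if (u : ℕ) + 1 = i then -a i - c
       else -a ((u : ℕ) + 1))
    else if (u : ℕ) = (v : ℕ) + 1 then a ((v : ℕ) + 1)
    else 0

theorem charmatrix_detour_eq {R : Type*} [CommRing R] {δ : Type*} [DecidableEq δ]
    [Fintype δ] (n i j : ℕ) (hi1 : 1 ≤ i) (hi : i ≤ n) (hj1 : 1 ≤ j) (hj : j ≤ n)
    (a : ℕ → R) (c d : R) (B : Matrix δ δ R) (s t : δ) :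
    charmatrix (detour n i j a c d B s t) =
      fromBlocks (charmatrix (pblk n i a c))
        (Matrix.of fun u w =>
          if u = (⟨j - 1, by omega⟩ : Fin n) ∧ w = t then -C d else 0)
        (Matrix.of fun w u =>
          if w = s ∧ u = (⟨i - 1, by omega⟩ : Fin n) then -C c else 0)
        (charmatrix B) := by
  refine Matrix.ext fun u v => ?_
  rcases u with u | u <;> rcases v with v | v
  · simp only [fromBlocks_apply₁₁, charmatrix_apply, detour, pblk, diagonal_apply,
      Sum.inl.injEq, of_apply]
  · have hne : (Sum.inl u : Fin n ⊕ δ) ≠ Sum.inr v := by simp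
    rw [charmatrix_apply_ne _ _ _ hne]
    simp only [fromBlocks_apply₁₂, detour, of_apply]
    have hcond : ((u : ℕ) + 1 = j) ↔ (u = (⟨j - 1, by omega⟩ : Fin n)) := by
      rw [Fin.ext_iff]
      show ((u : ℕ) + 1 = j) ↔ ((u : ℕ) = j - 1)
      omega
    rw [show (if (u : ℕ) + 1 = j ∧ v = t then d else 0)
        = (if u = (⟨j - 1, by omega⟩ : Fin n) ∧ v = t then d else 0) by
      simp only [hcond]]
    split_ifs <;> simp
  · have hne : (Sum.inr u : Fin n ⊕ δ) ≠ Sum.inl v := by simp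
    rw [charmatrix_apply_ne _ _ _ hne]
    simp only [fromBlocks_apply₂₁, detour, of_apply]
    have hcond : ((v : ℕ) + 1 = i) ↔ (v = (⟨i - 1, by omega⟩ : Fin n)) := by
      rw [Fin.ext_iff]
      show ((v : ℕ) + 1 = i) ↔ ((v : ℕ) = i - 1)
      omega
    rw [show (if u = s ∧ (v : ℕ) + 1 = i then c else 0)
        = (if u = s ∧ v = (⟨i - 1, by omega⟩ : Fin n) then c else 0) by
      simp only [hcond]]
    split_ifs <;> simp
  · simp only [fromBlocks_apply₂₂, charmatrix_apply, detour, diagonal_apply,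
      Sum.inr.injEq, of_apply]

theorem pblk_tri {R : Type*} [CommRing R] (n i : ℕ) (a : ℕ → R) (c : R) :
    BlockTriangular (charmatrix (pblk n i a c)) OrderDual.toDual := by
  intro u v h
  have huv : u < v := by simpa using h
  rw [charmatrix_apply_ne _ _ _ (Fin.ne_of_lt huv)]
  have hlt : (u : ℕ) < (v : ℕ) := huv
  simp only [pblk, of_apply]
  rw [if_neg (Fin.ne_of_lt huv), if_neg (by omega)]
  simp

theorem pblk_tri' {R : Type*} [CommRing R] (n i : ℕ) (a : ℕ → R) (c : R)
    (i₀ j₀ : Fin n) (hij : i₀ ≤ j₀) (w : R[X]) :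
    BlockTriangular ((charmatrix (pblk n i a c)).updateRow j₀ (Pi.single i₀ w))
      OrderDual.toDual := by
  intro u v h
  have huv : u < v := by simpa using h
  rw [updateRow_apply]
  split_ifs with hu
  · subst hu
    rw [Pi.single_apply, if_neg (by intro hv; subst hv; exact absurd hij (not_le.2 huv))]
  · exact pblk_tri n i a c (by simpa using huv : OrderDual.toDual v < OrderDual.toDual u)

theorem det_pblk_shift {R : Type*} [CommRing R] (n : ℕ) (hn : 3 ≤ n) (i : ℕ)
    (hi1 : 1 ≤ i) (hi2 : i ≤ n - 2) (a a' : ℕ → R) (c : R)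
    (ha'1 : a' 1 = a (n - 1))
    (ha'k : ∀ k, 2 ≤ k → k ≤ n - 1 → a' k = a (k - 1)) :
    (charmatrix (pblk n i a c)).det = (charmatrix (pblk n (i + 1) a' c)).det := by
  rw [det_of_lowerTriangular _ (pblk_tri n i a c),
      det_of_lowerTriangular _ (pblk_tri n (i + 1) a' c)]
  refine prod_cycle_shift n i hn hi1 hi2 _ _ ?_ ?_ ?_ ?_
  · rw [charmatrix_apply_eq, charmatrix_apply_eq]
    simp only [pblk, of_apply, if_pos rfl]
    rw [if_neg (show ¬(i - 1 + 1 = n) by omega), if_pos (show i - 1 + 1 = i by omega),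
        if_neg (show ¬(i + 1 = n) by omega),
        ha'k (i + 1) (by omega) (by omega)]
    simp
  · rw [charmatrix_apply_eq, charmatrix_apply_eq]
    simp only [pblk, of_apply, if_pos rfl]
    rw [if_pos (show n - 1 + 1 = n by omega), if_pos (show n - 1 + 1 = n by omega)]
    simp
  · rw [charmatrix_apply_eq, charmatrix_apply_eq]
    simp only [pblk, of_apply, if_pos rfl]
    rw [if_neg (show ¬(n - 2 + 1 = n) by omega), if_neg (show ¬(n - 2 + 1 = i) by omega),
        if_neg (show ¬(0 + 1 = n) by omega), if_neg (show ¬(0 + 1 = i + 1) by omega),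
        show n - 2 + 1 = n - 1 by omega, show (0 : ℕ) + 1 = 1 by omega, ha'1]
    simp
  · intro u hu h3 h2 h1
    rw [charmatrix_apply_eq, charmatrix_apply_eq]
    simp only [pblk, of_apply, if_pos rfl]
    rw [if_neg (show ¬(u + 1 = n) by omega), if_neg (show ¬(u + 1 = i) by omega),
        if_neg (show ¬(u + 1 + 1 = n) by omega), if_neg (show ¬(u + 1 + 1 = i + 1) by omega),
        ha'k (u + 1 + 1) (by omega) (by omega)]
    simp

theorem adj_pblk_shift {R : Type*} [CommRing R] (n : ℕ) (hn : 3 ≤ n) (i j : ℕ)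
    (hi1 : 1 ≤ i) (hij : i ≤ j) (hj : j ≤ n - 1) (hi2 : i ≤ n - 2)
    (a a' : ℕ → R) (c : R) (w : R[X])
    (ha'1 : a' 1 = a (n - 1))
    (ha'k : ∀ k, 2 ≤ k → k ≤ n - 1 → a' k = a (k - 1)) :
    ((charmatrix (pblk n i a c)).updateRow ⟨j - 1, by omega⟩
        (Pi.single ⟨i - 1, by omega⟩ w)).det
    = ((charmatrix (pblk n (i + 1) a' c)).updateRow ⟨j + 1 - 1, by omega⟩
        (Pi.single ⟨i + 1 - 1, by omega⟩ w)).det := by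
  rw [det_of_lowerTriangular _
      (pblk_tri' n i a c _ _ (by simp only [Fin.mk_le_mk]; omega) w),
    det_of_lowerTriangular _
      (pblk_tri' n (i + 1) a' c _ _ (by simp only [Fin.mk_le_mk]; omega) w)]
  rcases eq_or_lt_of_le hij with he | hlt
  · subst he
    refine prod_cycle_shift n i hn hi1 hi2 _ _ ?_ ?_ ?_ ?_
    · have hfin : (⟨i, by omega⟩ : Fin n) = ⟨i + 1 - 1, by omega⟩ :=
        Fin.ext (show i = i + 1 - 1 by omega)
      rw [updateRow_apply, if_pos rfl, Pi.single_apply, if_pos rfl,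
        updateRow_apply, if_pos hfin, Pi.single_apply, if_pos hfin]
    · rw [updateRow_apply, if_neg (by simp only [Fin.mk.injEq]; omega),
        updateRow_apply, if_neg (by simp only [Fin.mk.injEq]; omega),
        charmatrix_apply_eq, charmatrix_apply_eq]
      simp only [pblk, of_apply, if_pos rfl]
      rw [if_pos (show n - 1 + 1 = n by omega), if_pos (show n - 1 + 1 = n by omega)]
      simp
    · rw [updateRow_apply, if_neg (by simp only [Fin.mk.injEq]; omega),
        updateRow_apply, if_neg (by simp only [Fin.mk.injEq]; omega),
        charmatrix_apply_eq, charmatrix_apply_eq]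
      simp only [pblk, of_apply, if_pos rfl]
      rw [if_neg (show ¬(n - 2 + 1 = n) by omega), if_neg (show ¬(n - 2 + 1 = i) by omega),
          if_neg (show ¬(0 + 1 = n) by omega), if_neg (show ¬(0 + 1 = i + 1) by omega),
          show n - 2 + 1 = n - 1 by omega, show (0 : ℕ) + 1 = 1 by omega, ha'1]
      simp
    · intro u hu h3 h2 h1
      rw [updateRow_apply, if_neg (by simp only [Fin.mk.injEq]; omega),
        updateRow_apply, if_neg (by simp only [Fin.mk.injEq]; omega),
        charmatrix_apply_eq, charmatrix_apply_eq]
      simp only [pblk, of_apply, if_pos rfl]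
      rw [if_neg (show ¬(u + 1 = n) by omega), if_neg (show ¬(u + 1 = i) by omega),
          if_neg (show ¬(u + 1 + 1 = n) by omega), if_neg (show ¬(u + 1 + 1 = i + 1) by omega),
          ha'k (u + 1 + 1) (by omega) (by omega)]
      simp
  · rw [Finset.prod_eq_zero (Finset.mem_univ (⟨j - 1, by omega⟩ : Fin n)) (by
        rw [updateRow_apply, if_pos rfl, Pi.single_apply,
          if_neg (by simp only [Fin.mk.injEq]; omega)]),
      Finset.prod_eq_zero (Finset.mem_univ (⟨j + 1 - 1, by omega⟩ : Fin n)) (by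
        rw [updateRow_apply, if_pos rfl, Pi.single_apply,
          if_neg (by simp only [Fin.mk.injEq]; omega)])]

/-- Theorem (LHS coefficients of moving a detour one step down the path): with
`a'` the cyclic shift of the path rates (`a'_1 = a_{n−1}`, `a'_k = a_{k−1}` for
`2 ≤ k ≤ n−1`), `det(X·I − D(i, j; a, c, d, B)) = det(X·I − D(i+1, j+1; a', c, d, B))`. -/
theorem det_charmatrix_detour_shift {R : Type*} [CommRing R]
    {δ : Type*} [Fintype δ] [DecidableEq δ] [Nonempty δ]
    (n : ℕ) (hn : 3 ≤ n) (i j : ℕ)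
    (hi1 : 1 ≤ i) (hij : i ≤ j) (hj : j ≤ n - 1) (hi2 : i ≤ n - 2)
    (a a' : ℕ → R) (c d : R) (B : Matrix δ δ R) (s t : δ)
    (ha'1 : a' 1 = a (n - 1))
    (ha'k : ∀ k, 2 ≤ k → k ≤ n - 1 → a' k = a (k - 1)) :
    (charmatrix (detour n i j a c d B s t)).det =
      (charmatrix (detour n (i + 1) (j + 1) a' c d B s t)).det := by
  rw [charmatrix_detour_eq n i j hi1 (by omega) (by omega) (by omega) a c d B s t,
      charmatrix_detour_eq n (i + 1) (j + 1) (by omega) (by omega) (by omega) (by omega)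
        a' c d B s t,
      det_fromBlocks_single_single, det_fromBlocks_single_single,
      det_pblk_shift n hn i hi1 hi2 a a' c ha'1 ha'k,
      adj_pblk_shift n hn i j hi1 hij hj hi2 a a' c (-C c) ha'1 ha'k]
end

section
/- Let R be a commutative ring, let A be an n×n matrix over R, and let i be an index. Then det(X·I − A) = det(X·I − Aᵀ) in R[X], and for every index j, det((X·I − A)^{(j,i)}) = det((X·I − Aᵀ)^{(i,j)}). Consequently, the linear compartmental model with graph G, input set S, single output compartment i, and leak set Leak has the same coefficient map as the model with the graph obtained from G by reversing all edges, single input compartment i, output set S, and the same leak set. -/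
open Polynomial Matrix

/-- Theorem (reversing all edges transposes the compartmental matrix and
preserves the coefficient map): `det(X·I − A) = det(X·I − Aᵀ)`, and for all
indices `i`, `j`, `det((X·I − A)^{(j,i)}) = det((X·I − Aᵀ)^{(i,j)})`.  Hence the
model with input set `S`, single output `i`, compartmental matrix `A` has the
same coefficient map as the edge-reversed model with single input `i` and
output set `S`. -/
theorem charmatrix_transpose_coefficients {R : Type*} [CommRing R] (n : ℕ)
    (A : Matrix (Fin (n + 1)) (Fin (n + 1)) R) (i : Fin (n + 1)) :
    (charmatrix A).det = (charmatrix Aᵀ).det ∧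
    ∀ j : Fin (n + 1),
      ((charmatrix A).submatrix j.succAbove i.succAbove).det =
        ((charmatrix Aᵀ).submatrix i.succAbove j.succAbove).det := by
  have h : charmatrix Aᵀ = (charmatrix A)ᵀ := by
    ext a b
    by_cases hab : a = b <;> simp [charmatrix_apply, transpose_apply, hab, eq_comm]
  constructor
  · rw [h, det_transpose]
  · intro j
    rw [h]
    rw [show ((charmatrix A)ᵀ).submatrix i.succAbove j.succAbove
        = ((charmatrix A).submatrix j.succAbove i.succAbove)ᵀ from rfl,
      det_transpose]
end

section
/- Define c : ℝ³ → ℝ⁵ by c(a01, a21, a32) = (a32 + a01 + a21, a01·a32 + a21·a32, a21·a32, a32, a01·a32 + a21·a32) and c' : ℝ³ → ℝ⁵ by c'(a02, a21, a32) = (a32 + a02 + a21, a02·a21 + a21·a32, a21·a32, a32, a21·a32). Then the image of c on the positive octant {(x,y,z) : x > 0, y > 0, z > 0} is disjoint from the image of c' on the positive octant. Specifically, every point in the image of c has its second coordinate equal to its fifth coordinate, while every point in the image of c' (with positive parameters) has its second coordinate strictly greater than its fifth coordinate. Hence the two corresponding linear compartmental models are distinguishable. -/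
/-- The coefficient map of the model with edges `1 → 2`, `2 → 3`, leak from
compartment 1, inputs in compartments 1 and 2, output in compartment 3. -/
def cMap (a01 a21 a32 : ℝ) : ℝ × ℝ × ℝ × ℝ × ℝ :=
  (a32 + a01 + a21, a01 * a32 + a21 * a32, a21 * a32, a32, a01 * a32 + a21 * a32)

/-- The coefficient map of the model with edges `1 → 2`, `2 → 3`, leak from
compartment 2, inputs in compartments 1 and 2, output in compartment 3. -/
def cMap' (a02 a21 a32 : ℝ) : ℝ × ℝ × ℝ × ℝ × ℝ :=
  (a32 + a02 + a21, a02 * a21 + a21 * a32, a21 * a32, a32, a21 * a32)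

/-- The image of `cMap` over positive parameters. -/
def imageC : Set (ℝ × ℝ × ℝ × ℝ × ℝ) :=
  {p | ∃ a01 a21 a32 : ℝ, 0 < a01 ∧ 0 < a21 ∧ 0 < a32 ∧ p = cMap a01 a21 a32}

/-- The image of `cMap'` over positive parameters. -/
def imageC' : Set (ℝ × ℝ × ℝ × ℝ × ℝ) :=
  {p | ∃ a02 a21 a32 : ℝ, 0 < a02 ∧ 0 < a21 ∧ 0 < a32 ∧ p = cMap' a02 a21 a32}

/-- Theorem: every point in the image of `cMap` (positive parameters) has its
second coordinate equal to its fifth coordinate, every point in the image of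
`cMap'` (positive parameters) has its second coordinate strictly greater than
its fifth coordinate, and hence the two images are disjoint: the two models are
distinguishable. -/
theorem two_input_models_distinguishable :
    (∀ p ∈ imageC, p.2.1 = p.2.2.2.2) ∧
    (∀ p ∈ imageC', p.2.1 > p.2.2.2.2) ∧
    imageC ∩ imageC' = ∅ := by
  refine ⟨?_, ?_, ?_⟩
  · rintro p ⟨a01, a21, a32, _, _, _, rfl⟩
    simp [cMap]
  · rintro p ⟨a02, a21, a32, h1, h2, h3, rfl⟩
    simp only [cMap']
    nlinarith
  · ext p
    simp only [Set.mem_inter_iff, Set.mem_empty_iff_false, iff_false]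
    rintro ⟨⟨a01, a21, a32, _, _, _, rfl⟩, ⟨b02, b21, b32, hb1, hb2, hb3, he⟩⟩
    simp only [cMap, cMap', Prod.mk.injEq] at he
    obtain ⟨_, h2, _, _, h5⟩ := he
    nlinarith
end
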